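/- arXiv:1112.3758 — 5 statements merged into one kernel-verified Lean document; each statement's English description precedes it below -/
import Mathlib

section
/- For every regular language L over a finite alphabet Σ and every arithmetic progression s(i) = ai + b with a ≥ 1, the filtered language L_{a,b} = { w_{a,b} : w ∈ L } is regular. -/
/-!
Filtering `x ++ c :: t` with `|x| = b` keeps `c` and then filters `t` with offset `a - 1`. So
`c :: v ∈ L_{a,b}` iff, for some `x` of length `b`, `v` lies in the `(a, a - 1)`-filter of the
left quotient of `L` by `x ++ [c]`. For `L` accepted by a DFA these left quotients are the
languages accepted from its states, so an NFA on the DFA's states that guesses the skipped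
blocks accepts `L_{a,b}`, and the subset construction makes it deterministic.
-/

/-- `filt a b w` is the word formed by the letters of `w` at positions
`b, a+b, 2a+b, …` that are less than `|w|`. -/
def filt {α : Type*} (a b : ℕ) (w : List α) : List α :=
  (List.range w.length).filterMap (fun i => w[a * i + b]?)

/-- `filtL a b L = { w_{a,b} : w ∈ L }`. -/
def filtL {α : Type*} (a b : ℕ) (L : Language α) : Language α :=
  (filt a b) '' L

section filt
variable {α : Type*} {a b : ℕ}

theorem filt_eq_nil_iff {w : List α} : filt a b w = [] ↔ w.length ≤ b := by
  simp only [filt, List.filterMap_eq_nil_iff, List.mem_range, List.getElem?_eq_none_iff]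
  refine ⟨fun h => ?_, fun h i _ => le_add_left h⟩
  by_contra! hb
  have := h 0 (by omega)
  omega

theorem filterMap_range_eq_filt (ha : 1 ≤ a) (w : List α) {n : ℕ} (hn : w.length ≤ n) :
    (List.range n).filterMap (fun i => w[a * i + b]?) = filt a b w := by
  obtain ⟨k, rfl⟩ := Nat.exists_eq_add_of_le hn
  rw [List.range_add, List.filterMap_append, filt, List.filterMap_map, List.append_right_eq_self,
    List.filterMap_eq_nil_iff]
  intro i _
  rw [Function.comp_apply, List.getElem?_eq_none_iff]
  nlinarith

theorem filt_append_cons (ha : 1 ≤ a) {x : List α} (hx : x.length = b) (c : α) (t : List α) :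
    filt a b (x ++ c :: t) = c :: filt a (a - 1) t := by
  have hhead : (x ++ c :: t)[a * 0 + b]? = some c := by simp [← hx]
  have htail (i : ℕ) : (x ++ c :: t)[a * (i + 1) + b]? = t[a * i + (a - 1)]? := by
    rw [List.getElem?_append_right (by rw [hx]; nlinarith), hx, List.getElem?_cons,
      if_neg (by rw [Nat.add_sub_cancel]; exact Nat.mul_ne_zero (by omega) i.succ_ne_zero)]
    congr 1
    rw [Nat.mul_succ]
    omega
  rw [filt, List.length_append, List.length_cons, hx, Nat.add_succ, List.range_succ_eq_map,
    List.filterMap_cons, hhead, List.filterMap_map, Function.comp_def]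
  simp only [Nat.succ_eq_add_one, htail]
  rw [filterMap_range_eq_filt ha t (by omega)]

theorem filt_eq_cons_iff (ha : 1 ≤ a) {w : List α} {c : α} {v : List α} :
    filt a b w = c :: v ↔ ∃ x t, x.length = b ∧ w = x ++ c :: t ∧ filt a (a - 1) t = v := by
  constructor
  · intro h
    have hb : b < w.length := by
      by_contra! hb
      simp [filt_eq_nil_iff.2 hb] at h
    have hlen : (w.take b).length = b := by simp [hb.le]
    have hw : w = w.take b ++ w[b] :: w.drop (b + 1) := by simp
    rw [hw, filt_append_cons ha hlen, List.cons.injEq] at h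
    exact ⟨_, _, hlen, h.1 ▸ hw, h.2⟩
  · rintro ⟨x, t, hx, rfl, rfl⟩
    exact filt_append_cons ha hx c t

theorem mem_filtL {L : Language α} {v : List α} : v ∈ filtL a b L ↔ ∃ w ∈ L, filt a b w = v :=
  Iff.rfl

theorem nil_mem_filtL_iff {L : Language α} : [] ∈ filtL a b L ↔ ∃ w ∈ L, w.length ≤ b := by
  simp [mem_filtL, filt_eq_nil_iff]

theorem cons_mem_filtL_iff (ha : 1 ≤ a) {L : Language α} {c : α} {v : List α} :
    c :: v ∈ filtL a b L ↔
      ∃ x : List α, x.length = b ∧ v ∈ filtL a (a - 1) (L.leftQuotient (x ++ [c])) := by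
  simp only [mem_filtL, filt_eq_cons_iff ha, Language.mem_leftQuotient]
  constructor
  · rintro ⟨_, hw, x, t, hx, rfl, rfl⟩
    exact ⟨x, hx, t, by simpa using hw, rfl⟩
  · rintro ⟨x, hx, t, ht, rfl⟩
    exact ⟨_, by simpa using ht, x, t, hx, rfl, rfl⟩

end filt

theorem NFA.mem_acceptsFrom_iff_exists_singleton {α σ : Type*} {N : NFA α σ} {S : Set σ}
    {v : List α} : v ∈ N.acceptsFrom S ↔ ∃ s ∈ S, v ∈ N.acceptsFrom {s} := by
  simp only [NFA.mem_acceptsFrom, NFA.mem_evalFrom_iff_exists (S := S)]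
  exact ⟨fun ⟨s, hs, t, ht, h⟩ => ⟨t, ht, s, hs, h⟩, fun ⟨t, ht, s, hs, h⟩ => ⟨s, hs, t, ht, h⟩⟩

namespace DFA
variable {α σ : Type*} (M : DFA α σ) (a b : ℕ)

theorem leftQuotient_acceptsFrom (q : σ) (x : List α) :
    (M.acceptsFrom q).leftQuotient x = M.acceptsFrom (M.evalFrom q x) := by
  ext y
  simp [Language.mem_leftQuotient, mem_acceptsFrom, evalFrom_of_append]

/-- The flag in a state `(q, started)` records whether a letter has been kept yet, i.e. whether
`b` or `a - 1` letters are skipped before the next kept one. -/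
def filtNFA : NFA α (σ × Bool) where
  step p c := (fun x => (M.step (M.evalFrom p.1 x) c, true)) ''
    {x | x.length = bif p.2 then a - 1 else b}
  start := {(M.start, false)}
  accept := {p | ∃ z ∈ M.acceptsFrom p.1, z.length ≤ bif p.2 then a - 1 else b}

theorem filtNFA_step (p : σ × Bool) (c : α) :
    (M.filtNFA a b).step p c = (fun x => (M.step (M.evalFrom p.1 x) c, true)) ''
      {x | x.length = bif p.2 then a - 1 else b} :=
  rfl

theorem filtNFA_acceptsFrom (ha : 1 ≤ a) (q : σ) (started : Bool) :
    (M.filtNFA a b).acceptsFrom {(q, started)} =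
      filtL a (bif started then a - 1 else b) (M.acceptsFrom q) := by
  ext v
  induction v generalizing q started with
  | nil =>
    simp only [NFA.nil_mem_acceptsFrom, Set.mem_singleton_iff, exists_eq_left, nil_mem_filtL_iff]
    rfl
  | cons c v ih =>
    rw [NFA.cons_mem_acceptsFrom, NFA.stepSet_singleton, cons_mem_filtL_iff ha, filtNFA_step,
      NFA.mem_acceptsFrom_iff_exists_singleton, Set.exists_mem_image]
    simp only [Set.mem_ofPred_eq, leftQuotient_acceptsFrom, evalFrom_append_singleton]
    exact exists_congr fun x => and_congr_right fun _ => ih _ true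

theorem filtNFA_accepts (ha : 1 ≤ a) : (M.filtNFA a b).accepts = filtL a b M.accepts :=
  M.filtNFA_acceptsFrom a b ha M.start false

end DFA

theorem filtL_regular_general {α : Type*} (L : Language α) (hL : L.IsRegular)
    (a b : ℕ) (ha : 1 ≤ a) : (filtL a b L).IsRegular := by
  obtain ⟨σ, _, M, rfl⟩ := hL
  exact ⟨_, Fintype.ofFinite _, (M.filtNFA a b).toDFA, by
    rw [NFA.toDFA_correct, M.filtNFA_accepts a b ha]⟩

theorem filtL_regular {α : Type*} [Fintype α] (L : Language α) (hL : L.IsRegular)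
    (a b : ℕ) (ha : 1 ≤ a) : (filtL a b L).IsRegular :=
  filtL_regular_general L hL a b ha
end

section
/- For every regular language L, the set of languages { L_{a,0} : a ≥ 1 } obtained by filtering L by all weak arithmetic progressions is finite. -/
section Filt

variable {α : Type*}

theorem filterMap_range_getElem?_eq_filt (a b : ℕ) {w : List α} {N : ℕ} (hN : w.length ≤ N) :
    (List.range N).filterMap (fun i => w[(a + 1) * i + b]?) = filt (a + 1) b w := by
  obtain ⟨k, rfl⟩ := Nat.exists_eq_add_of_le hN
  have h_out : ((List.range k).map (w.length + ·)).filterMap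
      (fun i => w[(a + 1) * i + b]?) = [] := by
    refine List.filterMap_eq_nil_iff.2 fun i hi => List.getElem?_eq_none ?_
    obtain ⟨j, -, rfl⟩ := List.mem_map.1 hi
    nlinarith
  rw [List.range_add, List.filterMap_append, h_out, List.append_nil, filt]

theorem mem_filtL_iff {a b : ℕ} {L : Language α} {v : List α} :
    v ∈ filtL a b L ↔ ∃ w ∈ L, filt a b w = v :=
  Iff.rfl

theorem filt_nil (a b : ℕ) : filt a b ([] : List α) = [] := rfl

theorem filt_succ_cons (a : ℕ) (c : α) (t : List α) :
    filt (a + 1) 0 (c :: t) = c :: filt (a + 1) 0 (t.drop a) := by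
  have h_shift : ∀ i, (c :: t)[(a + 1) * (i + 1) + 0]? = (t.drop a)[(a + 1) * i + 0]? := by
    intro i
    rw [List.getElem?_drop, show (a + 1) * (i + 1) + 0 = a + ((a + 1) * i + 0) + 1 by ring,
      List.getElem?_cons_succ]
  rw [filt, List.length_cons, List.range_succ_eq_map, List.filterMap_cons, List.filterMap_map]
  simp only [Function.comp_def, h_shift]
  rw [filterMap_range_getElem?_eq_filt _ _ (by simp)]
  simp

theorem filt_succ_eq_nil_iff {a : ℕ} {w : List α} : filt (a + 1) 0 w = [] ↔ w = [] := by
  cases w <;> simp [filt_nil, filt_succ_cons]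

end Filt

namespace DFA

variable {α σ : Type*} (M : DFA α σ)

def ReachesIn (n : ℕ) (p p' : σ) : Prop :=
  ∃ u : List α, u.length = n ∧ M.evalFrom p u = p'

def AcceptsWithin (n : ℕ) (p : σ) : Prop :=
  ∃ u : List α, u.length ≤ n ∧ M.evalFrom p u ∈ M.accept

def FiltAccepts (R : σ → σ → Prop) (A : σ → Prop) : σ → List α → Prop
  | q, [] => q ∈ M.accept
  | q, c :: v => (v = [] ∧ A (M.step q c)) ∨ ∃ p, R (M.step q c) p ∧ FiltAccepts R A p v

theorem nil_mem_filtL_acceptsFrom_iff (a : ℕ) (q : σ) :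
    [] ∈ filtL (a + 1) 0 (M.acceptsFrom q) ↔ q ∈ M.accept := by
  simp only [mem_filtL_iff, filt_succ_eq_nil_iff, mem_acceptsFrom]
  exact ⟨fun ⟨_, hw, rfl⟩ => hw, fun hq => ⟨[], hq, rfl⟩⟩

theorem cons_mem_filtL_acceptsFrom_iff (a : ℕ) (q : σ) (c : α) (v : List α) :
    c :: v ∈ filtL (a + 1) 0 (M.acceptsFrom q) ↔
      (v = [] ∧ M.AcceptsWithin a (M.step q c)) ∨
        ∃ p, M.ReachesIn a (M.step q c) p ∧ v ∈ filtL (a + 1) 0 (M.acceptsFrom p) := by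
  simp only [mem_filtL_iff]
  constructor
  · rintro ⟨_ | ⟨d, t⟩, hw, hf⟩
    · simp [filt_nil] at hf
    rw [filt_succ_cons, List.cons.injEq] at hf
    obtain ⟨rfl, rfl⟩ := hf
    rw [mem_acceptsFrom, evalFrom_cons, ← List.take_append_drop a t, evalFrom_of_append] at hw
    by_cases hlen : t.length ≤ a
    · rw [List.drop_eq_nil_of_le hlen, evalFrom_nil] at hw
      exact Or.inl ⟨by rw [List.drop_eq_nil_of_le hlen, filt_nil],
        t.take a, List.length_take_le a t, hw⟩
    · exact Or.inr
        ⟨_, ⟨t.take a, List.length_take_of_le (by omega), rfl⟩, t.drop a, hw, rfl⟩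
  · rintro (⟨rfl, u, hu, hacc⟩ | ⟨p, ⟨u, hu, rfl⟩, w, hw, rfl⟩)
    · exact ⟨c :: u, hacc, by rw [filt_succ_cons, List.drop_eq_nil_of_le hu, filt_nil]⟩
    · refine ⟨c :: (u ++ w), ?_, by rw [filt_succ_cons, List.drop_left' hu]⟩
      rwa [mem_acceptsFrom, evalFrom_cons, evalFrom_of_append]

theorem mem_filtL_acceptsFrom_iff (a : ℕ) (q : σ) (v : List α) :
    v ∈ filtL (a + 1) 0 (M.acceptsFrom q) ↔
      M.FiltAccepts (M.ReachesIn a) (M.AcceptsWithin a) q v := by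
  induction v generalizing q with
  | nil => exact M.nil_mem_filtL_acceptsFrom_iff a q
  | cons c v ih => simp only [cons_mem_filtL_acceptsFrom_iff, ih, FiltAccepts]

theorem filtL_accepts_eq (a : ℕ) :
    filtL (a + 1) 0 M.accepts =
      {v | M.FiltAccepts (M.ReachesIn a) (M.AcceptsWithin a) M.start v} :=
  Set.ext fun v => M.mem_filtL_acceptsFrom_iff a M.start v

end DFA

theorem filtL_weak_finite {α : Type*} (L : Language α) (hL : L.IsRegular) :
    {M : Language α | ∃ a : ℕ, 1 ≤ a ∧ M = filtL a 0 L}.Finite := by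
  obtain ⟨σ, _, M, rfl⟩ := hL
  refine (Set.finite_range fun RA : (σ → σ → Prop) × (σ → Prop) =>
    {v | M.FiltAccepts RA.1 RA.2 M.start v}).subset ?_
  rintro _ ⟨_, ha, rfl⟩
  obtain ⟨a, rfl⟩ := Nat.exists_eq_add_of_le' ha
  exact ⟨(M.ReachesIn a, M.AcceptsWithin a), (M.filtL_accepts_eq a).symm⟩
end

section
/- Let L₁ = { a 0^{3m+1} b (0⁺c)^{m-2} 0⁺ : m ≥ 3 }. Then L₁ is context-free. -/
/-!
The grammar `S → a 0¹⁰ M Z`, `M → 000 M P | b P`, `P → 0 P | 0 c`, `Z → 0 Z | 0` generates `L₁`: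
`P` and `Z` generate `0⁺c` and `0⁺`, and `M` generates `0^{3j} b (0⁺c)^{j+1}`, since every use of
`M → 000 M P` pairs three zeros in front of the `b` with one block `0⁺c` behind it. With `m = j + 3`
the word `a 0¹⁰ 0^{3j} b (0⁺c)^{j+1} 0⁺` is exactly `a 0^{3m+1} b (0⁺c)^{m-2} 0⁺`.
-/

/-- The alphabet `{a,b,c,0}` encoded as `Fin 4`, with `0 := 0`, `a := 1`, `b := 2`, `c := 3`.
`L₁ = { a 0^{3m+1} b (0⁺c)^{m-2} 0⁺ : m ≥ 3 }`. -/
def L₁ : Language (Fin 4) :=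
  { w | ∃ m : ℕ, 3 ≤ m ∧ ∃ ks : List ℕ, ∃ kf : ℕ,
      ks.length = m - 2 ∧ (∀ k ∈ ks, 1 ≤ k) ∧ 1 ≤ kf ∧
      w = 1 :: List.replicate (3 * m + 1) 0 ++ 2 ::
        ((ks.map (fun k => List.replicate k (0 : Fin 4) ++ [3])).flatten ++
          List.replicate kf 0) }

theorem List.iff_exists_replicate_append_of_forall_iff {α : Type*} {D : List α → Prop} {a : α}
    {u : List α} (hD : ∀ w, D w ↔ (∃ w', w = a :: w' ∧ D w') ∨ w = a :: u) (w : List α) :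
    D w ↔ ∃ k, 1 ≤ k ∧ w = List.replicate k a ++ u := by
  constructor
  · induction w with
    | nil =>
      rw [hD]
      rintro (⟨_, h, _⟩ | h) <;> cases h
    | cons x w ih =>
      rw [hD]
      rintro (⟨w', hw, h⟩ | hw) <;> obtain ⟨rfl, rfl⟩ := List.cons_eq_cons.mp hw
      · obtain ⟨k, hk, rfl⟩ := ih h
        exact ⟨k + 1, by omega, rfl⟩
      · exact ⟨1, le_rfl, rfl⟩
  · rintro ⟨k, hk, rfl⟩
    induction k, hk using Nat.le_induction with
    | base => exact (hD _).mpr (.inr rfl)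
    | succ k _ ih => exact (hD _).mpr (.inl ⟨_, rfl, ih⟩)

namespace ContextFreeRule

variable {T N : Type*} {r : ContextFreeRule T N}

lemma Rewrites.append_split {u v w : List (Symbol T N)} (h : r.Rewrites (u ++ v) w) :
    (∃ u', r.Rewrites u u' ∧ w = u' ++ v) ∨ ∃ v', r.Rewrites v v' ∧ w = u ++ v' := by
  induction u generalizing w with
  | nil => exact .inr ⟨w, h, rfl⟩
  | cons x u ih =>
    cases h with
    | head s => exact .inl ⟨r.output ++ u, .head u, by simp⟩
    | cons x h =>
      rcases ih h with ⟨u', hu, rfl⟩ | ⟨v', hv, rfl⟩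
      · exact .inl ⟨x :: u', hu.cons x, rfl⟩
      · exact .inr ⟨v', hv, rfl⟩

lemma not_rewrites_map_terminal (u : List T) (w : List (Symbol T N)) :
    ¬ r.Rewrites (u.map .terminal) w := fun h => by
  obtain ⟨x, -, hx⟩ := List.mem_map.mp h.nonterminal_input_mem
  cases hx

end ContextFreeRule

namespace ContextFreeGrammar

variable {T : Type*} {g : ContextFreeGrammar T}

lemma Derives.eq_of_map_terminal {u : List T} {w : List (Symbol T g.NT)}
    (h : g.Derives (u.map .terminal) w) : w = u.map .terminal := by
  rcases h.eq_or_head with rfl | ⟨v, ⟨r, -, hr⟩, -⟩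
  · rfl
  · exact absurd hr (r.not_rewrites_map_terminal u v)

@[simp]
lemma derives_map_terminal_iff {u w : List T} :
    g.Derives (u.map .terminal) (w.map .terminal) ↔ w = u :=
  ⟨fun h => List.map_injective_iff.mpr (fun _ _ => Symbol.terminal.inj) h.eq_of_map_terminal,
    fun h => h ▸ .refl _⟩

@[simp]
lemma derives_nil_iff {w : List T} : g.Derives [] (w.map .terminal) ↔ w = [] :=
  derives_map_terminal_iff (u := [])

lemma Derives.append_split {u v : List (Symbol T g.NT)} {w : List T}
    (h : g.Derives (u ++ v) (w.map .terminal)) :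
    ∃ w₁ w₂, w = w₁ ++ w₂ ∧ g.Derives u (w₁.map .terminal) ∧ g.Derives v (w₂.map .terminal) := by
  generalize hs : u ++ v = s at h
  induction h using Relation.ReflTransGen.head_induction_on generalizing u v with
  | refl =>
    obtain ⟨w₁, w₂, rfl, rfl, rfl⟩ := List.map_eq_append_iff.mp hs.symm
    exact ⟨w₁, w₂, rfl, .refl _, .refl _⟩
  | head hp _ ih =>
    obtain ⟨r, hr, hrw⟩ := hp
    subst hs
    rcases hrw.append_split with ⟨u', hu, rfl⟩ | ⟨v', hv, rfl⟩
    · obtain ⟨w₁, w₂, rfl, h₁, h₂⟩ := ih rfl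
      exact ⟨w₁, w₂, rfl, Produces.trans_derives ⟨r, hr, hu⟩ h₁, h₂⟩
    · obtain ⟨w₁, w₂, rfl, h₁, h₂⟩ := ih rfl
      exact ⟨w₁, w₂, rfl, h₁, Produces.trans_derives ⟨r, hr, hv⟩ h₂⟩

lemma derives_append_iff {u v : List (Symbol T g.NT)} {w : List T} :
    g.Derives (u ++ v) (w.map .terminal) ↔
      ∃ w₁ w₂, w = w₁ ++ w₂ ∧ g.Derives u (w₁.map .terminal) ∧ g.Derives v (w₂.map .terminal) :=
  ⟨Derives.append_split, fun ⟨w₁, w₂, hw, h₁, h₂⟩ => by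
    rw [hw, List.map_append]
    exact (h₁.append_right _).trans (h₂.append_left _)⟩

lemma derives_map_terminal_append_iff {u : List T} {v : List (Symbol T g.NT)} {w : List T} :
    g.Derives (u.map .terminal ++ v) (w.map .terminal) ↔
      ∃ w', w = u ++ w' ∧ g.Derives v (w'.map .terminal) := by
  simp [derives_append_iff]

@[simp]
lemma derives_terminal_cons_iff {a : T} {v : List (Symbol T g.NT)} {w : List T} :
    g.Derives (.terminal a :: v) (w.map .terminal) ↔
      ∃ w', w = a :: w' ∧ g.Derives v (w'.map .terminal) :=
  derives_map_terminal_append_iff (u := [a])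

lemma derives_nonterminal_cons_iff {A : g.NT} {v : List (Symbol T g.NT)} {w : List T} :
    g.Derives (.nonterminal A :: v) (w.map .terminal) ↔
      ∃ w₁ w₂, w = w₁ ++ w₂ ∧ g.Derives [.nonterminal A] (w₁.map .terminal) ∧
        g.Derives v (w₂.map .terminal) :=
  derives_append_iff (u := [.nonterminal A])

lemma derives_nonterminal_iff {A : g.NT} {w : List T} :
    g.Derives [.nonterminal A] (w.map .terminal) ↔
      ∃ r ∈ g.rules, r.input = A ∧ g.Derives r.output (w.map .terminal) := by
  refine ⟨fun h => ?_, fun ⟨r, hr, hA, h⟩ => hA ▸ Produces.trans_derives ⟨r, hr, .input_output⟩ h⟩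
  rcases h.eq_or_head with heq | ⟨v, ⟨r, hr, hrw⟩, h⟩
  · obtain ⟨x, -, hx⟩ := List.map_eq_singleton_iff.mp heq.symm
    cases hx
  · cases hrw with
    | head => exact ⟨r, hr, rfl, by simpa using h⟩
    | cons _ hrs => nomatch hrs

end ContextFreeGrammar

namespace L₁

open ContextFreeGrammar Symbol List

inductive NT | S | M | P | Z
  deriving DecidableEq

def rules : Finset (ContextFreeRule (Fin 4) NT) :=
  {⟨.S, (1 :: replicate 10 0).map terminal ++ [nonterminal .M, nonterminal .Z]⟩,
    ⟨.M, [terminal 0, terminal 0, terminal 0, nonterminal .M, nonterminal .P]⟩,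
    ⟨.M, [terminal 2, nonterminal .P]⟩,
    ⟨.P, [terminal 0, nonterminal .P]⟩, ⟨.P, [terminal 0, terminal 3]⟩,
    ⟨.Z, [terminal 0, nonterminal .Z]⟩, ⟨.Z, [terminal 0]⟩}

abbrev grammar : ContextFreeGrammar (Fin 4) := ⟨NT, .S, rules⟩

/- simp only finds the generic `Derives` lemmas for `grammar` when `g := grammar` is given
explicitly: it indexes `grammar.NT` as an unreduced projection. -/

lemma derives_Z_unfold {w : List (Fin 4)} :
    grammar.Derives [nonterminal .Z] (w.map terminal) ↔
      (∃ w', w = 0 :: w' ∧ grammar.Derives [nonterminal .Z] (w'.map terminal)) ∨ w = [0] := by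
  rw [derives_nonterminal_iff]
  simp [rules, derives_terminal_cons_iff (g := grammar), derives_nil_iff (g := grammar)]

lemma derives_P_unfold {w : List (Fin 4)} :
    grammar.Derives [nonterminal .P] (w.map terminal) ↔
      (∃ w', w = 0 :: w' ∧ grammar.Derives [nonterminal .P] (w'.map terminal)) ∨ w = [0, 3] := by
  rw [derives_nonterminal_iff]
  simp [rules, derives_terminal_cons_iff (g := grammar), derives_nil_iff (g := grammar)]

lemma derives_M_unfold {w : List (Fin 4)} :
    grammar.Derives [nonterminal .M] (w.map terminal) ↔
      (∃ w₁ w₂, w = 0 :: 0 :: 0 :: (w₁ ++ w₂) ∧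
        grammar.Derives [nonterminal .M] (w₁.map terminal) ∧
        grammar.Derives [nonterminal .P] (w₂.map terminal)) ∨
      ∃ w', w = 2 :: w' ∧ grammar.Derives [nonterminal .P] (w'.map terminal) := by
  rw [derives_nonterminal_iff]
  simp [rules, derives_terminal_cons_iff (g := grammar),
    derives_nonterminal_cons_iff (g := grammar) (v := [nonterminal .P])]

lemma derives_S_iff {w : List (Fin 4)} :
    grammar.Derives [nonterminal .S] (w.map terminal) ↔
      ∃ w₁ w₂, w = 1 :: replicate 10 0 ++ w₁ ++ w₂ ∧
        grammar.Derives [nonterminal .M] (w₁.map terminal) ∧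
        grammar.Derives [nonterminal .Z] (w₂.map terminal) := by
  rw [derives_nonterminal_iff]
  simp [rules, derives_terminal_cons_iff (g := grammar),
    derives_nonterminal_cons_iff (g := grammar) (v := [nonterminal .Z])]

def block (k : ℕ) : List (Fin 4) := replicate k 0 ++ [3]

lemma derives_Z_iff {w : List (Fin 4)} :
    grammar.Derives [nonterminal .Z] (w.map terminal) ↔ ∃ k, 1 ≤ k ∧ w = replicate k 0 := by
  simpa using iff_exists_replicate_append_of_forall_iff (fun _ => derives_Z_unfold) w

lemma derives_P_iff {w : List (Fin 4)} :
    grammar.Derives [nonterminal .P] (w.map terminal) ↔ ∃ k, 1 ≤ k ∧ w = block k :=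
  iff_exists_replicate_append_of_forall_iff (fun _ => derives_P_unfold) w

lemma derives_M_iff {w : List (Fin 4)} :
    grammar.Derives [nonterminal .M] (w.map terminal) ↔
      ∃ k ks, (∀ j ∈ k :: ks, 1 ≤ j) ∧
        w = replicate (3 * ks.length) 0 ++ 2 :: ((k :: ks).map block).flatten := by
  constructor
  · intro h
    induction hn : w.length using Nat.strong_induction_on generalizing w with
    | _ n ih =>
    rcases derives_M_unfold.mp h with ⟨w₁, w₂, rfl, h₁, h₂⟩ | ⟨w', rfl, h'⟩
    · obtain ⟨k, ks, hks, rfl⟩ := ih _ (by simp [← hn]; omega) h₁ rfl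
      obtain ⟨j, hj, rfl⟩ := derives_P_iff.mp h₂
      refine ⟨k, ks ++ [j], by simp_all [or_imp, forall_and], ?_⟩
      simp [Nat.mul_succ, replicate_succ]
    · obtain ⟨k, hk, rfl⟩ := derives_P_iff.mp h'
      exact ⟨k, [], by simpa using hk, by simp⟩
  · rintro ⟨k, ks, hks, rfl⟩
    induction ks using List.reverseRecOn with
    | nil =>
      exact derives_M_unfold.mpr (.inr ⟨_, by simp, derives_P_iff.mpr ⟨k, hks k mem_cons_self, rfl⟩⟩)
    | append_singleton ks j ih =>
      obtain ⟨hks, hj⟩ : (∀ x ∈ k :: ks, 1 ≤ x) ∧ 1 ≤ j := by simpa [or_imp, forall_and, and_assoc] using hks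
      refine derives_M_unfold.mpr (.inl ⟨_, _, ?_, ih hks, derives_P_iff.mpr ⟨j, hj, rfl⟩⟩)
      simp [Nat.mul_succ, replicate_succ]

lemma split_leading_zeros (n : ℕ) (u v : List (Fin 4)) :
    1 :: replicate (3 * (n + 3) + 1) 0 ++ 2 :: (u ++ v) =
      1 :: replicate 10 0 ++ (replicate (3 * n) 0 ++ 2 :: u) ++ v := by
  rw [show 3 * (n + 3) + 1 = 10 + 3 * n by ring, replicate_add]
  simp

theorem language_grammar : grammar.language = L₁ := by
  ext w
  rw [mem_language_iff, derives_S_iff]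
  constructor
  · rintro ⟨w₁, w₂, rfl, h₁, h₂⟩
    obtain ⟨k, ks, hks, rfl⟩ := derives_M_iff.mp h₁
    obtain ⟨kf, hkf, rfl⟩ := derives_Z_iff.mp h₂
    exact ⟨ks.length + 3, by omega, k :: ks, kf, by simp, hks, hkf,
      (split_leading_zeros _ _ _).symm⟩
  · rintro ⟨m, hm, _ | ⟨k, ks⟩, kf, hlen, hks, hkf, rfl⟩
    · simp at hlen
      omega
    obtain rfl : m = ks.length + 3 := by simp at hlen; omega
    exact ⟨_, _, split_leading_zeros _ _ _, derives_M_iff.mpr ⟨k, ks, hks, rfl⟩,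
      derives_Z_iff.mpr ⟨kf, hkf, rfl⟩⟩

end L₁

theorem L₁_contextFree : L₁.IsContextFree :=
  ⟨L₁.grammar, L₁.language_grammar⟩
end

section
/- Let L = { a 0^{3m+1} b (0⁺c)^{m-2} 0⁺ d 0^{3n+1} e (0⁺f)^{n-2} 0⁺ g 0^{3p+1} h (0⁺i)^{p-2} 0⁺ j : m,n,p ≥ 3 } over the alphabet {a,b,c,d,e,f,g,h,i,j,0}. Then diag(L) ∩ a b c⁺ d e f⁺ g h i⁺ j = { a b c^t d e f^t g h i^t j : t ≥ 1 }. -/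
/-- `diag n w` is the diagonal of `w` arranged as an `n × n` array in row-major
order: the letters of `w` at positions `(n+1)·i` for `0 ≤ i ≤ n-1`. -/
def diag {α : Type*} (n : ℕ) (w : List α) : List α :=
  (List.range n).filterMap (fun i => w[(n + 1) * i]?)

/-- `diagL L = { diag(w) : w ∈ L, |w| = n² for some n ≥ 1 }`. -/
def diagL {α : Type*} (L : Language α) : Language α :=
  { x | ∃ w ∈ L, ∃ n : ℕ, 1 ≤ n ∧ w.length = n ^ 2 ∧ x = diag n w }

/-- The alphabet `{a,b,c,d,e,f,g,h,i,j,0}` encoded as `Fin 11`,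
with `0 := 0`, `a := 1`, `b := 2`, …, `j := 10`. -/
abbrev A11 := Fin 11

/-- `seg x y z m ks kf` is the word `x 0^{3m+1} y 0^{k₁} z ⋯ 0^{k_{m-2}} z 0^{kf}`. -/
def seg (x y z : A11) (m : ℕ) (ks : List ℕ) (kf : ℕ) : List A11 :=
  x :: List.replicate (3 * m + 1) 0 ++ y ::
    ((ks.map (fun k => List.replicate k (0 : A11) ++ [z])).flatten ++ List.replicate kf 0)

/-- The language
`{ a 0^{3m+1} b (0⁺c)^{m-2} 0⁺ d 0^{3n+1} e (0⁺f)^{n-2} 0⁺ g 0^{3p+1} h (0⁺i)^{p-2} 0⁺ j : m,n,p ≥ 3 }`. -/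
def Lbig : Language A11 :=
  { w | ∃ m n p : ℕ, 3 ≤ m ∧ 3 ≤ n ∧ 3 ≤ p ∧
      ∃ ks₁ ks₂ ks₃ : List ℕ, ∃ kf₁ kf₂ kf₃ : ℕ,
        ks₁.length = m - 2 ∧ ks₂.length = n - 2 ∧ ks₃.length = p - 2 ∧
        (∀ k ∈ ks₁, 1 ≤ k) ∧ (∀ k ∈ ks₂, 1 ≤ k) ∧ (∀ k ∈ ks₃, 1 ≤ k) ∧
        1 ≤ kf₁ ∧ 1 ≤ kf₂ ∧ 1 ≤ kf₃ ∧
        w = seg 1 2 3 m ks₁ kf₁ ++ seg 4 5 6 n ks₂ kf₂ ++ seg 7 8 9 p ks₃ kf₃ ++ [10] }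

/-- The word `a b c^t d e f^s g h i^u j`. -/
def pat (t s u : ℕ) : List A11 :=
  1 :: 2 :: (List.replicate t 3 ++ 4 :: 5 :: (List.replicate s 6 ++
    7 :: 8 :: (List.replicate u 9 ++ [10])))


/-!
A word of `Lbig` of length `n²` is read as an `n × n` array, whose diagonal letters are `n + 1`
apart. The letters `b, d, e, g, h` occur exactly once in the word, so on a diagonal
`a b cᵗ d e fˢ g h iᵘ j` their positions are forced; as `a ⋯ b`, `d ⋯ e`, `g ⋯ h` are `3m + 2`,
`3q + 2`, `3p + 2` apart, all three block parameters equal `m` and `n = 3m + 1`. The diagonal is a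
subword, so `t, s, u ≤ m - 2`, while its length gives `t + s + u + 7 = n`; hence `t = s = u`.
Conversely, making every gap of zeros of length `n = 3t + 7` puts the letters of the pattern at
the starts of successive rows.
-/

namespace List

variable {α : Type*}

theorem getElem?_append_length_add (l₁ l₂ : List α) (i : ℕ) :
    (l₁ ++ l₂)[l₁.length + i]? = l₂[i]? := by
  rw [getElem?_append_right (by omega), Nat.add_sub_cancel_left]

theorem eq_of_getElem?_eq_some_of_count_le_one [BEq α] [LawfulBEq α] {l : List α} {a : α}
    (hc : l.count a ≤ 1) {i j : ℕ} (hi : l[i]? = some a) (hj : l[j]? = some a) : i = j := by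
  wlog hij : i < j generalizing i j
  · rcases Nat.lt_or_ge j i with h | h
    · exact (this hj hi h).symm
    · omega
  have h_take : a ∈ l.take j := mem_of_getElem? (by rwa [getElem?_take_of_lt hij])
  have h_drop : a ∈ l.drop j := mem_of_getElem? (i := 0) (by rwa [getElem?_drop, add_zero])
  have h_split := count_append (a := a) (l₁ := l.take j) (l₂ := l.drop j)
  rw [take_append_drop] at h_split
  have := count_pos_iff.2 h_take
  have := count_pos_iff.2 h_drop
  omega

theorem flatten_replicate_append_append (u v : List α) (t : ℕ) :
    (replicate t (u ++ v)).flatten ++ u = u ++ (replicate t (v ++ u)).flatten := by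
  induction t with
  | zero => simp
  | succ t ih => simp [replicate_succ, ih]

end List

section Diag

variable {α : Type*} {n : ℕ} {w : List α}

theorem succ_mul_lt_sq {i : ℕ} (hi : i < n) : (n + 1) * i < n ^ 2 := by
  nlinarith

theorem diag_eq_ofFn (hw : w.length = n ^ 2) :
    diag n w = List.ofFn fun i : Fin n => w[(n + 1) * i]'(hw ▸ succ_mul_lt_sq i.2) := by
  rw [diag, ← List.map_coe_finRange_eq_range, List.filterMap_map, List.ofFn_eq_map,
    List.filterMap_eq_map_iff_forall_eq_some]
  intro i _
  simp

theorem getElem?_diag (hw : w.length = n ^ 2) (i : ℕ) : (diag n w)[i]? = w[(n + 1) * i]? := by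
  rw [diag_eq_ofFn hw, List.getElem?_ofFn]
  split_ifs with hi
  · simp
  · refine (List.getElem?_eq_none ?_).symm
    rw [hw, sq]
    exact Nat.mul_le_mul (by omega) (by omega)

theorem length_diag (hw : w.length = n ^ 2) : (diag n w).length = n := by
  simp [diag_eq_ofFn hw]

theorem diag_sublist (hw : w.length = n ^ 2) : (diag n w).Sublist w :=
  List.sublist_of_orderEmbedding_getElem?_eq
    (OrderEmbedding.ofStrictMono _ (strictMono_mul_left_of_pos n.succ_pos)) (getElem?_diag hw)

theorem succ_mul_eq_of_getElem?_diag [BEq α] [LawfulBEq α] {a : α} {i k : ℕ}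
    (hw : w.length = n ^ 2) (hc : w.count a ≤ 1) (hi : (diag n w)[i]? = some a)
    (hk : w[k]? = some a) : (n + 1) * i = k :=
  List.eq_of_getElem?_eq_some_of_count_le_one hc (getElem?_diag hw i ▸ hi) hk

end Diag

section Padding

variable {α : Type*} (n : ℕ) (z : α) (L : List α) (x : α)

theorem getElem?_flatMap_cons_replicate_append (i : ℕ) :
    (L.flatMap (· :: List.replicate n z) ++ [x])[(n + 1) * i]? = (L ++ [x])[i]? := by
  induction L generalizing i with
  | nil => cases i <;> simp
  | cons ℓ L ih =>
    cases i with
    | zero => simp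
    | succ i =>
      have hblock : (n + 1) * (i + 1) = (ℓ :: List.replicate n z).length + (n + 1) * i := by
        simp [Nat.mul_succ, Nat.add_comm]
      rw [List.flatMap_cons, List.append_assoc, hblock, List.getElem?_append_length_add, ih,
        List.cons_append, List.getElem?_cons_succ]

theorem length_flatMap_cons_replicate_append (h : L.length + 1 = n) :
    (L.flatMap (· :: List.replicate n z) ++ [x]).length = n ^ 2 := by
  subst h
  simp only [List.length_append, List.length_flatMap, List.length_cons, List.length_replicate,
    List.map_const', List.sum_replicate, smul_eq_mul, List.length_nil]
  ring

theorem diag_flatMap_cons_replicate_append (h : L.length + 1 = n) :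
    diag n (L.flatMap (· :: List.replicate n z) ++ [x]) = L ++ [x] := by
  ext1 i
  rw [getElem?_diag (length_flatMap_cons_replicate_append n z L x h),
    getElem?_flatMap_cons_replicate_append]

end Padding

theorem getElem?_pat (t s u : ℕ) :
    (pat t s u)[1]? = some 2 ∧ (pat t s u)[t + 2]? = some 4 ∧ (pat t s u)[t + 3]? = some 5 ∧
      (pat t s u)[t + s + 4]? = some 7 ∧ (pat t s u)[t + s + 5]? = some 8 := by
  rw [show t + s + 4 = t + (s + 2) + 2 by omega, show t + s + 5 = t + (s + 3) + 2 by omega]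
  simp [pat]

theorem length_pat (t s u : ℕ) : (pat t s u).length = t + s + u + 7 := by
  simp only [pat, List.length_cons, List.length_append, List.length_replicate, List.length_nil]
  omega

theorem count_pat (t s u : ℕ) :
    (pat t s u).count 3 = t ∧ (pat t s u).count 6 = s ∧ (pat t s u).count 9 = u := by
  simp [pat, List.count_replicate]

section Seg

variable (x y z : A11) (m : ℕ) (ks : List ℕ) (kf : ℕ)

theorem getElem?_of_eq_append_seg_append {w l r : List A11}
    (hw : w = l ++ seg x y z m ks kf ++ r) :
    w[l.length]? = some x ∧ w[l.length + (3 * m + 2)]? = some y := by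
  simp only [hw, List.append_assoc, List.getElem?_append_length_add]
  simp [seg]

theorem count_seg {v : A11} (hv : v ≠ 0) :
    (seg x y z m ks kf).count v =
      (if x = v then 1 else 0) + (if y = v then 1 else 0) + if z = v then ks.length else 0 := by
  simp [seg, List.count_cons, List.count_append, List.count_replicate, List.count_flatten,
    hv.symm, Function.comp_def, add_comm, add_left_comm]

theorem seg_replicate (t : ℕ) :
    seg x y z m (List.replicate t (3 * m + 1)) (3 * m + 1) =
      (x :: y :: List.replicate t z).flatMap (· :: List.replicate (3 * m + 1) 0) := by
  have := List.flatten_replicate_append_append (List.replicate (3 * m + 1) (0 : A11)) [z] t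
  simp [seg, List.flatMap_replicate, this]

end Seg

theorem eq_of_diag_eq_pat {m q p n t s u kf₁ kf₂ kf₃ : ℕ} {ks₁ ks₂ ks₃ : List ℕ}
    (hl₁ : ks₁.length = m - 2) (hl₂ : ks₂.length = q - 2) (hl₃ : ks₃.length = p - 2)
    (hw : (seg 1 2 3 m ks₁ kf₁ ++ seg 4 5 6 q ks₂ kf₂ ++ seg 7 8 9 p ks₃ kf₃ ++ [10]).length = n ^ 2)
    (hdiag : diag n (seg 1 2 3 m ks₁ kf₁ ++ seg 4 5 6 q ks₂ kf₂ ++ seg 7 8 9 p ks₃ kf₃ ++ [10]) =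
      pat t s u) :
    t = s ∧ s = u := by
  set S₁ := seg 1 2 3 m ks₁ kf₁
  set S₂ := seg 4 5 6 q ks₂ kf₂
  set S₃ := seg 7 8 9 p ks₃ kf₃
  set W := S₁ ++ S₂ ++ S₃ ++ [10]
  have hunique (v : A11) (hv : v ∈ [2, 4, 5, 7, 8]) : W.count v ≤ 1 := by
    simp only [List.mem_cons, List.not_mem_nil, or_false] at hv
    rcases hv with rfl | rfl | rfl | rfl | rfl <;>
      simp [W, S₁, S₂, S₃, List.count_append, count_seg]
  have hpos (v : A11) (hv : v ∈ [2, 4, 5, 7, 8]) {i k : ℕ} (hi : (pat t s u)[i]? = some v)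
      (hk : W[k]? = some v) : (n + 1) * i = k :=
    succ_mul_eq_of_getElem?_diag hw (hunique v hv) (hdiag ▸ hi) hk
  obtain ⟨pb, pd, pe, pg, ph⟩ := getElem?_pat t s u
  have hS₁ := getElem?_of_eq_append_seg_append 1 2 3 m ks₁ kf₁ (w := W) (l := [])
    (r := S₂ ++ S₃ ++ [10]) (by simp only [W, List.append_assoc, List.nil_append]; rfl)
  have hS₂ := getElem?_of_eq_append_seg_append 4 5 6 q ks₂ kf₂ (w := W) (l := S₁)
    (r := S₃ ++ [10]) (List.append_assoc _ _ _)
  have hS₃ := getElem?_of_eq_append_seg_append 7 8 9 p ks₃ kf₃ (w := W) (l := S₁ ++ S₂)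
    (r := [10]) rfl
  have hb : n + 1 = 3 * m + 2 := by simpa using hpos 2 (by simp) pb hS₁.2
  have hd₀ := hpos 4 (by simp) pd hS₂.1
  have he := hpos 5 (by simp) pe hS₂.2
  have hg := hpos 7 (by simp) pg hS₃.1
  have hh := hpos 8 (by simp) ph hS₃.2
  -- `d, e` and `g, h` are adjacent on the diagonal, so they lie `n + 1` apart in `W`.
  have hq : n + 1 = 3 * q + 2 := by linarith
  have hp : n + 1 = 3 * p + 2 := by linarith
  have hn : n = t + s + u + 7 := by rw [← length_pat, ← hdiag, length_diag hw]
  obtain ⟨ct, cs, cu⟩ := count_pat t s u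
  have hsub := hdiag ▸ diag_sublist hw
  have ht : t ≤ m - 2 := by
    simpa [W, S₁, S₂, S₃, List.count_append, count_seg, ct, hl₁] using hsub.count_le 3
  have hs : s ≤ q - 2 := by
    simpa [W, S₁, S₂, S₃, List.count_append, count_seg, cs, hl₂] using hsub.count_le 6
  have hu : u ≤ p - 2 := by
    simpa [W, S₁, S₂, S₃, List.count_append, count_seg, cu, hl₃] using hsub.count_le 9
  omega

theorem pat_mem_diagL {t : ℕ} (ht : 1 ≤ t) : pat t t t ∈ diagL Lbig := by
  set N := 3 * (t + 2) + 1
  set L : List A11 := 1 :: 2 :: List.replicate t 3 ++ 4 :: 5 :: List.replicate t 6 ++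
    7 :: 8 :: List.replicate t 9
  have hL : L.length + 1 = N := by
    simp only [L, N, List.length_cons, List.length_append, List.length_replicate]
    omega
  have hW : seg 1 2 3 (t + 2) (List.replicate t N) N ++ seg 4 5 6 (t + 2) (List.replicate t N) N ++
      seg 7 8 9 (t + 2) (List.replicate t N) N ++ [10] =
      L.flatMap (· :: List.replicate N 0) ++ [10] := by
    simp [N, L, seg_replicate]
  refine ⟨_, ⟨t + 2, t + 2, t + 2, by omega, by omega, by omega, List.replicate t N,
    List.replicate t N, List.replicate t N, N, N, N, by simp, by simp, by simp, ?_, ?_, ?_,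
    by omega, by omega, by omega, rfl⟩, N, by omega, ?_, ?_⟩
  iterate 3 exact fun k hk => (List.eq_of_mem_replicate hk).symm ▸ by omega
  · rw [hW, length_flatMap_cons_replicate_append N 0 L 10 hL]
  · rw [hW, diag_flatMap_cons_replicate_append N 0 L 10 hL]
    simp [L, pat]

theorem diagL_inter :
    { w ∈ diagL Lbig | ∃ t s u : ℕ, 1 ≤ t ∧ 1 ≤ s ∧ 1 ≤ u ∧ w = pat t s u } =
      { w | ∃ t : ℕ, 1 ≤ t ∧ w = pat t t t } := by
  ext w
  constructor
  · rintro ⟨⟨W, ⟨m, q, p, -, -, -, ks₁, ks₂, ks₃, kf₁, kf₂, kf₃, hl₁, hl₂, hl₃, -, -, -, -, -, -,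
      rfl⟩, n, -, hw, rfl⟩, t, s, u, ht, -, -, hdiag⟩
    obtain ⟨rfl, rfl⟩ := eq_of_diag_eq_pat hl₁ hl₂ hl₃ hw hdiag
    exact ⟨t, ht, hdiag⟩
  · rintro ⟨t, ht, rfl⟩
    exact ⟨pat_mem_diagL ht, t, t, t, ht, ht, ht, rfl⟩
end

section
/- For every t ≥ 1, the word z = a 0^{3m+1} b (0^{3m+1} c)^{m-2} 0^{3m+1} d 0^{3m+1} e (0^{3m+1} f)^{m-2} 0^{3m+1} g 0^{3m+1} h (0^{3m+1} i)^{m-2} 0^{3m+1} j with m = t+2 has length (3m+1)² and diag(z) = a b c^t d e f^t g h i^t j. -/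
/-! With `m = t + 2` and `n = 3m + 1`, every gap of the canonical word is exactly `n` zeros, so
the word is `x₀ 0ⁿ x₁ 0ⁿ ⋯ x_{n-2} 0ⁿ j`, where `x₀ ⋯ x_{n-2} = a b c^t d e f^t g h i^t` has
`3t + 6 = n - 1` letters. Its length is `(n - 1)(n + 1) + 1 = n²`, and since every block `xₖ 0ⁿ`
has length `n + 1`, the letter `xₖ` sits at position `(n + 1)k`, on the diagonal, and so does
the final `j`. -/

namespace List

variable {α : Type*}

lemma filterMap_getElem?_range (L : List α) :
    (range L.length).filterMap (fun i => L[i]?) = L := by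
  induction L with
  | nil => simp
  | cons x L ih =>
    rw [length_cons, range_succ_eq_map]
    simp [filterMap_map, ih]

lemma flatten_replicate_append_comm (t : ℕ) (u v : List α) :
    (replicate t (u ++ v)).flatten ++ u = u ++ (replicate t (v ++ u)).flatten := by
  induction t with
  | zero => simp
  | succ t ih => simp [replicate_succ, ih]

end List

def padLetters {α : Type*} (z : α) (n : ℕ) (L : List α) : List α :=
  (L.map (fun x => x :: List.replicate n z)).flatten

section PadLetters

variable {α : Type*} (z : α) (n : ℕ)

@[simp]
lemma padLetters_nil : padLetters z n [] = [] := rfl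

@[simp]
lemma padLetters_cons (x : α) (L : List α) :
    padLetters z n (x :: L) = x :: List.replicate n z ++ padLetters z n L := rfl

lemma padLetters_append (L₁ L₂ : List α) :
    padLetters z n (L₁ ++ L₂) = padLetters z n L₁ ++ padLetters z n L₂ := by
  simp [padLetters]

lemma length_padLetters (L : List α) : (padLetters z n L).length = L.length * (n + 1) := by
  induction L with
  | nil => simp
  | cons x L ih => simp [ih]; ring

lemma getElem?_padLetters_append (r : List α) :
    ∀ (L : List α) (i : ℕ), i ≤ L.length →
      (padLetters z n L ++ r)[(n + 1) * i]? = (L ++ r)[i]?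
  | [], i, hi => by simp_all
  | x :: L, 0, _ => by simp
  | x :: L, i + 1, hi => by
    have hblock : (x :: List.replicate n z).length = n + 1 := by simp
    rw [padLetters_cons, List.append_assoc, mul_add_one, add_comm,
      List.getElem?_append_right (by omega), hblock, Nat.add_sub_cancel_left,
      getElem?_padLetters_append r L i (by simpa using hi)]
    simp

variable (y : α) (L : List α) {n}

lemma length_padLetters_append_singleton (hn : L.length + 1 = n) :
    (padLetters z n L ++ [y]).length = n ^ 2 := by
  subst hn
  simp [length_padLetters]
  ring

lemma diag_padLetters_append_singleton (hn : L.length + 1 = n) :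
    diag n (padLetters z n L ++ [y]) = L ++ [y] := by
  subst hn
  rw [diag, List.filterMap_congr fun i hi =>
    getElem?_padLetters_append z _ [y] L i (Nat.lt_succ_iff.mp (List.mem_range.mp hi))]
  simpa using List.filterMap_getElem?_range (L ++ [y])

end PadLetters

lemma seg_eq_padLetters (x y z : A11) (m t : ℕ) :
    seg x y z m (List.replicate t (3 * m + 1)) (3 * m + 1)
      = padLetters 0 (3 * m + 1) (x :: y :: List.replicate t z) := by
  simp [seg, padLetters, List.map_replicate, List.flatten_replicate_append_comm]

theorem diag_of_canonical_word_general (t : ℕ) :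
    (seg 1 2 3 (t + 2) (List.replicate t (3 * (t + 2) + 1)) (3 * (t + 2) + 1) ++
        seg 4 5 6 (t + 2) (List.replicate t (3 * (t + 2) + 1)) (3 * (t + 2) + 1) ++
        seg 7 8 9 (t + 2) (List.replicate t (3 * (t + 2) + 1)) (3 * (t + 2) + 1) ++
        [10]).length = (3 * (t + 2) + 1) ^ 2 ∧
    diag (3 * (t + 2) + 1)
      (seg 1 2 3 (t + 2) (List.replicate t (3 * (t + 2) + 1)) (3 * (t + 2) + 1) ++
        seg 4 5 6 (t + 2) (List.replicate t (3 * (t + 2) + 1)) (3 * (t + 2) + 1) ++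
        seg 7 8 9 (t + 2) (List.replicate t (3 * (t + 2) + 1)) (3 * (t + 2) + 1) ++
        [10]) = pat t t t := by
  simp only [seg_eq_padLetters, ← padLetters_append]
  have hlen : (1 :: 2 :: List.replicate t (3 : A11) ++ 4 :: 5 :: List.replicate t 6 ++
      7 :: 8 :: List.replicate t 9).length + 1 = 3 * (t + 2) + 1 := by
    simp
    ring
  refine ⟨length_padLetters_append_singleton _ _ _ hlen, ?_⟩
  rw [diag_padLetters_append_singleton _ _ _ hlen]
  simp [pat]

theorem diag_of_canonical_word (t : ℕ) (ht : 1 ≤ t) :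
    (seg 1 2 3 (t + 2) (List.replicate t (3 * (t + 2) + 1)) (3 * (t + 2) + 1) ++
        seg 4 5 6 (t + 2) (List.replicate t (3 * (t + 2) + 1)) (3 * (t + 2) + 1) ++
        seg 7 8 9 (t + 2) (List.replicate t (3 * (t + 2) + 1)) (3 * (t + 2) + 1) ++
        [10]).length = (3 * (t + 2) + 1) ^ 2 ∧
    diag (3 * (t + 2) + 1)
      (seg 1 2 3 (t + 2) (List.replicate t (3 * (t + 2) + 1)) (3 * (t + 2) + 1) ++
        seg 4 5 6 (t + 2) (List.replicate t (3 * (t + 2) + 1)) (3 * (t + 2) + 1) ++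
        seg 7 8 9 (t + 2) (List.replicate t (3 * (t + 2) + 1)) (3 * (t + 2) + 1) ++
        [10]) = pat t t t :=
  diag_of_canonical_word_general t
end
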